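/- arXiv:2510.26971 — 2 statements merged into one kernel-verified Lean document; each statement's English description precedes it below -/
import Mathlib

section
/- The numerical range W(A) = {x*Ax : x ∈ ℂⁿ, ‖x‖ = 1} of a complex n×n matrix A is a convex subset of ℂ. -/
/-!
Moving `W(T)` by an affine map of `ℂ` (replace `T` by `a • T + b • 1`) reduces convexity to: if
`⟪x, T x⟫ = 1` and `⟪y, T y⟫ = 0` for unit vectors `x`, `y`, then `[0, 1] ⊆ W(T)`. After rotating
`y` by a unimodular scalar the cross term `⟪x, T y⟫ + ⟪y, T x⟫` is real, hence so is `⟪c, T c⟫` for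
every `c = (1 - t) x + t y`, `t ∈ ℝ`. The continuous function `re ⟪c, T c⟫ - s ‖c‖²` is `1 - s ≥ 0`
at `t = 0` and `-s ≤ 0` at `t = 1`, so it vanishes somewhere, and `c / ‖c‖` has value `s`.
-/

open Matrix

open scoped InnerProductSpace ComplexConjugate

theorem Complex.exists_norm_eq_one_im_mul_add_conj_mul_eq_zero (d e : ℂ) :
    ∃ μ : ℂ, ‖μ‖ = 1 ∧ (μ * d + conj μ * e).im = 0 := by
  set w := d - conj e
  refine ⟨Complex.exp (((-w.arg : ℝ) : ℂ) * Complex.I), Complex.norm_exp_ofReal_mul_I _, ?_⟩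
  have hw : Complex.exp (((-w.arg : ℝ) : ℂ) * Complex.I) * w = ‖w‖ := by
    conv_lhs => rw [← Complex.norm_mul_exp_arg_mul_I w]
    rw [mul_left_comm, ← Complex.exp_add]
    simp
  have := congrArg Complex.im hw
  simp only [Complex.mul_im, Complex.ofReal_im, w, Complex.sub_re, Complex.sub_im,
    Complex.conj_re, Complex.conj_im, Complex.add_im] at this ⊢
  linarith

namespace LinearMap

variable {E : Type*} [NormedAddCommGroup E] [InnerProductSpace ℂ E]

def numericalRange (T : E →ₗ[ℂ] E) : Set ℂ := {z | ∃ x, ‖x‖ = 1 ∧ ⟪x, T x⟫_ℂ = z}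

variable {T : E →ₗ[ℂ] E}

theorem inner_map_self_div_mem_numericalRange {v : E} (hv : v ≠ 0) :
    ⟪v, T v⟫_ℂ / (‖v‖ ^ 2 : ℝ) ∈ T.numericalRange := by
  refine ⟨((‖v‖⁻¹ : ℝ) : ℂ) • v, ?_, ?_⟩
  · rw [norm_smul, Complex.norm_real, Real.norm_of_nonneg (by positivity),
      inv_mul_cancel₀ (norm_ne_zero_iff.mpr hv)]
  · rw [map_smul, inner_smul_left, inner_smul_right, Complex.conj_ofReal]
    push_cast
    field_simp

theorem inner_map_self_ofReal_smul_add_ofReal_smul (a b : ℝ) (x y : E) :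
    ⟪(a : ℂ) • x + (b : ℂ) • y, T ((a : ℂ) • x + (b : ℂ) • y)⟫_ℂ =
      a ^ 2 * ⟪x, T x⟫_ℂ + a * b * (⟪x, T y⟫_ℂ + ⟪y, T x⟫_ℂ) + b ^ 2 * ⟪y, T y⟫_ℂ := by
  simp only [map_add, map_smul, inner_add_left, inner_add_right, inner_smul_left,
    inner_smul_right, Complex.conj_ofReal]
  ring

theorem numericalRange_smul_add_smul_one (a b : ℂ) :
    (a • T + b • 1).numericalRange = (fun z => a * z + b) '' T.numericalRange := by
  have hinner : ∀ x : E, ‖x‖ = 1 → ⟪x, (a • T + b • 1) x⟫_ℂ = a * ⟪x, T x⟫_ℂ + b := by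
    intro x hx
    simp [inner_self_eq_norm_sq_to_K, hx]
  ext w
  constructor
  · rintro ⟨x, hx, rfl⟩
    exact ⟨_, ⟨x, hx, rfl⟩, (hinner x hx).symm⟩
  · rintro ⟨_, ⟨x, hx, rfl⟩, rfl⟩
    exact ⟨x, hx, hinner x hx⟩

theorem ofReal_mem_numericalRange_of_im_inner_add_inner_eq_zero {x y : E}
    (hx : ‖x‖ = 1) (hy : ‖y‖ = 1)
    (hTx : ⟪x, T x⟫_ℂ = 1) (hTy : ⟪y, T y⟫_ℂ = 0) (hxy : (⟪x, T y⟫_ℂ + ⟪y, T x⟫_ℂ).im = 0)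
    {s : ℝ} (hs₀ : 0 ≤ s) (hs₁ : s ≤ 1) : (s : ℂ) ∈ T.numericalRange := by
  set c : ℝ → E := fun t => ((1 - t : ℝ) : ℂ) • x + (t : ℂ) • y
  have hQc : ∀ t, ⟪c t, T (c t)⟫_ℂ =
      (((1 - t) ^ 2 : ℝ) : ℂ) + ((1 - t) * t : ℝ) * (⟪x, T y⟫_ℂ + ⟪y, T x⟫_ℂ) := fun t => by
    simp only [c, inner_map_self_ofReal_smul_add_ofReal_smul, hTx, hTy]
    push_cast
    ring
  have hQc_im : ∀ t, (⟪c t, T (c t)⟫_ℂ).im = 0 := fun t => by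
    rw [hQc, Complex.add_im, Complex.ofReal_im, Complex.im_ofReal_mul, hxy, mul_zero, add_zero]
  have hcont : Continuous fun t => (⟪c t, T (c t)⟫_ℂ).re - s * ‖c t‖ ^ 2 := by
    simp only [hQc, c]
    fun_prop
  obtain ⟨t, -, hst⟩ : ∃ t ∈ Set.Icc (0 : ℝ) 1,
      (⟪c t, T (c t)⟫_ℂ).re - s * ‖c t‖ ^ 2 = 0 :=
    intermediate_value_Icc' zero_le_one hcont.continuousOn
      (by simp [c, hTx, hTy, hx, hy, hs₀, hs₁])
  have hct : c t ≠ 0 := by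
    intro h0
    -- `⟪v, T v⟫` at `v = t • y = -((1 - t) • x)` is both `0` and `(1 - t) ^ 2`
    have h : (1 - t : ℂ) = 0 ∨ (t - 1 : ℂ) = 0 := by
      simpa [inner_smul_left, inner_smul_right, hTx, hTy] using
        congrArg (fun v => ⟪v, T v⟫_ℂ) (eq_neg_of_add_eq_zero_right h0)
    obtain rfl : t = 1 := by norm_cast at h; rcases h with h | h <;> linarith
    simp only [c, sub_self, Complex.ofReal_zero, zero_smul, Complex.ofReal_one, one_smul,
      zero_add] at h0
    simp [h0] at hy
  have hQ : ⟪c t, T (c t)⟫_ℂ = (s * ‖c t‖ ^ 2 : ℝ) :=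
    Complex.ext (by rw [Complex.ofReal_re]; linarith) (by rw [Complex.ofReal_im]; exact hQc_im t)
  have := inner_map_self_div_mem_numericalRange (T := T) hct
  rwa [hQ, ← Complex.ofReal_div, mul_div_cancel_right₀ _ (by positivity)] at this

theorem ofReal_mem_numericalRange {x y : E} (hx : ‖x‖ = 1) (hy : ‖y‖ = 1)
    (hTx : ⟪x, T x⟫_ℂ = 1) (hTy : ⟪y, T y⟫_ℂ = 0) {s : ℝ} (hs₀ : 0 ≤ s) (hs₁ : s ≤ 1) :
    (s : ℂ) ∈ T.numericalRange := by
  obtain ⟨μ, hμ, hμxy⟩ :=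
    Complex.exists_norm_eq_one_im_mul_add_conj_mul_eq_zero ⟪x, T y⟫_ℂ ⟪y, T x⟫_ℂ
  refine ofReal_mem_numericalRange_of_im_inner_add_inner_eq_zero (y := μ • y)
    hx ?_ hTx ?_ ?_ hs₀ hs₁
  · rw [norm_smul, hμ, hy, one_mul]
  · simp [hTy]
  · simpa only [map_smul, inner_smul_left, inner_smul_right] using hμxy

theorem convex_numericalRange (T : E →ₗ[ℂ] E) : Convex ℝ T.numericalRange := by
  intro z₁ hz₁ z₂ hz₂ a b ha hb hab
  rcases eq_or_ne z₁ z₂ with rfl | hne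
  · rwa [← add_smul, hab, one_smul]
  have hne' : z₁ - z₂ ≠ 0 := sub_ne_zero.mpr hne
  -- the affine change `z ↦ (z - z₂) / (z₁ - z₂)` sends `z₁, z₂` to `1, 0`
  have hS := numericalRange_smul_add_smul_one (T := T) (z₁ - z₂)⁻¹ (-(z₁ - z₂)⁻¹ * z₂)
  obtain ⟨x, hx, hSx⟩ : (1 : ℂ) ∈ ((z₁ - z₂)⁻¹ • T + (-(z₁ - z₂)⁻¹ * z₂) • 1).numericalRange :=
    hS ▸ ⟨z₁, hz₁, by field_simp; ring⟩
  obtain ⟨y, hy, hSy⟩ : (0 : ℂ) ∈ ((z₁ - z₂)⁻¹ • T + (-(z₁ - z₂)⁻¹ * z₂) • 1).numericalRange :=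
    hS ▸ ⟨z₂, hz₂, by ring⟩
  obtain ⟨z, hz, hza⟩ := hS ▸ ofReal_mem_numericalRange hx hy hSx hSy ha (by linarith)
  convert hz using 1
  field_simp at hza
  rw [Complex.real_smul, Complex.real_smul, eq_sub_of_add_eq' hab]
  push_cast
  linear_combination -hza

end LinearMap

/-- **Toeplitz–Hausdorff theorem**: the numerical range
`W(A) = { xᴴ A x : x ∈ ℂⁿ, ‖x‖ = 1 }` of a complex `n × n` matrix `A`
is a convex subset of `ℂ`. -/
theorem numericalRange_convex (n : ℕ) (A : Matrix (Fin n) (Fin n) ℂ) :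
    Convex ℝ {z : ℂ | ∃ x : EuclideanSpace ℂ (Fin n), ‖x‖ = 1 ∧
      star (x : Fin n → ℂ) ⬝ᵥ A.mulVec (x : Fin n → ℂ) = z} := by
  convert (Matrix.toLpLin 2 2 A).convex_numericalRange using 1
  ext z
  simp only [LinearMap.numericalRange, EuclideanSpace.inner_eq_star_dotProduct, toLpLin_apply,
    dotProduct_comm]
end

section
/- Let G, H ∈ ℂ^{n×n} be sectorial matrices with phase intervals [φ̲(G), φ̄(G)] and [φ̲(H), φ̄(H)]. If φ̄(G) + φ̄(H) < π and φ̲(G) + φ̲(H) > −π, then det(I + GH) ≠ 0. -/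
/-!
If `(1 + G H) x = 0` with `x ≠ 0`, put `y = H x`, so that `G y = -x`. The quadratic forms
`a = y* G y = -(y* x)` and `b = x* H x = x* y` then satisfy `b = -conj a`. For a sectorial
`G = V* diag(e) V` the form `y* G y = ∑ |(V y)ᵢ|² eᵢ` is a nonzero nonnegative combination of unit
vectors whose phases lie in an arc shorter than `π`, so it lies in the cone over that arc:
`a = r e^{iθ}` and `b = s e^{iθ'}` with `θ`, `θ'` in the phase intervals of `G` and `H`.
But `b = -conj a` forces `θ + θ' ≡ π (mod 2π)`, whereas `θ + θ' ∈ (-π, π)`.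
-/

open Matrix

open Complex Finset Set
open scoped Real ComplexConjugate

def phaseSector (l u : ℝ) : Set ℂ := {z | ∃ r > (0 : ℝ), ∃ θ ∈ Icc l u, z = r * exp (θ * I)}

theorem exp_neg_mul_I_mul_ofReal_mul_exp_mul_I (c r θ : ℝ) :
    exp (-c * I) * (r * exp (θ * I)) = r * exp ((θ - c : ℝ) * I) := by
  rw [mul_left_comm, ← exp_add]
  push_cast
  ring_nf

theorem mem_phaseSector_of_rotations {l u : ℝ} {z : ℂ} (hlu : l ≤ u) (hul : u - l < π)
    (hl : 0 ≤ (exp (-l * I) * z).im) (hu : (exp (-u * I) * z).im ≤ 0)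
    (hm : 0 < (exp (-((l + u) / 2 : ℝ) * I) * z).re) : z ∈ phaseSector l u := by
  set ψ := arg (exp (-l * I) * z)
  have hz : z = ‖z‖ * exp ((ψ + l : ℝ) * I) := by
    have hnorm : ‖exp (-l * I) * z‖ = ‖z‖ := by
      rw [norm_mul, ← ofReal_neg, norm_exp_ofReal_mul_I, one_mul]
    calc z = exp (-(-l : ℝ) * I) * (exp (-l * I) * z) := by
          rw [← mul_assoc, ← exp_add]; push_cast; ring_nf; rw [exp_zero, one_mul]
      _ = _ := by rw [← norm_mul_exp_arg_mul_I (exp (-l * I) * z), hnorm,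
          exp_neg_mul_I_mul_ofReal_mul_exp_mul_I, sub_neg_eq_add]
  have hrot (c : ℝ) : exp (-c * I) * z = ‖z‖ * exp ((ψ + l - c : ℝ) * I) := by
    nth_rw 1 [hz]
    exact exp_neg_mul_I_mul_ofReal_mul_exp_mul_I c _ _
  rw [hrot, im_ofReal_mul, exp_ofReal_mul_I_im] at hu
  rw [hrot, re_ofReal_mul, exp_ofReal_mul_I_re] at hm
  have hψ : ψ ∈ Icc 0 π := ⟨arg_nonneg_iff.2 hl, arg_le_pi _⟩
  have hcos : 0 < Real.cos (ψ + l - (l + u) / 2) := pos_of_mul_pos_right hm (norm_nonneg z)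
  have hz0 : 0 < ‖z‖ := pos_of_mul_pos_left hm hcos.le
  -- the cosine condition keeps `ψ` below `π`, where the sine condition applies
  have hψ_lt : ψ + l - (l + u) / 2 < π / 2 := by
    by_contra! h
    exact hcos.not_ge (Real.cos_nonpos_of_pi_div_two_le_of_le h (by linarith [hψ.2]))
  have hψ_le : ψ ≤ u - l := by
    by_contra! h
    exact hu.not_gt (mul_pos hz0 (Real.sin_pos_of_pos_of_lt_pi (by linarith) (by linarith)))
  exact ⟨‖z‖, hz0, ψ + l, ⟨by linarith [hψ.1], by linarith⟩, hz⟩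

theorem exp_neg_mul_I_mul_sum {ι : Type*} [Fintype ι] (c : ℝ) (p t : ι → ℝ) :
    exp (-c * I) * ∑ i, (p i : ℂ) * exp (t i * I) = ∑ i, (p i : ℂ) * exp ((t i - c : ℝ) * I) := by
  rw [mul_sum]
  exact sum_congr rfl fun i _ => exp_neg_mul_I_mul_ofReal_mul_exp_mul_I c _ _

theorem sum_mul_exp_mem_phaseSector {ι : Type*} [Fintype ι] {l u : ℝ} (hul : u - l < π)
    {p t : ι → ℝ} (hp : ∀ i, 0 ≤ p i) (hpos : ∃ i, 0 < p i) (ht : ∀ i, t i ∈ Icc l u) :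
    ∑ i, (p i : ℂ) * exp (t i * I) ∈ phaseSector l u := by
  obtain ⟨j, hj⟩ := hpos
  refine mem_phaseSector_of_rotations ((ht j).1.trans (ht j).2) hul ?_ ?_ ?_
  · rw [exp_neg_mul_I_mul_sum, im_sum]
    refine sum_nonneg fun i _ => ?_
    rw [im_ofReal_mul, exp_ofReal_mul_I_im]
    exact mul_nonneg (hp i)
      (Real.sin_nonneg_of_nonneg_of_le_pi (by linarith [(ht i).1]) (by linarith [(ht i).2]))
  · rw [exp_neg_mul_I_mul_sum, im_sum]
    refine sum_nonpos fun i _ => ?_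
    rw [im_ofReal_mul, exp_ofReal_mul_I_im]
    exact mul_nonpos_of_nonneg_of_nonpos (hp i)
      (Real.sin_nonpos_of_nonpos_of_neg_pi_le (by linarith [(ht i).2]) (by linarith [(ht i).1]))
  · have hcos (i : ι) : 0 < Real.cos (t i - (l + u) / 2) :=
      Real.cos_pos_of_mem_Ioo ⟨by linarith [(ht i).1], by linarith [(ht i).2]⟩
    rw [exp_neg_mul_I_mul_sum, re_sum]
    simp_rw [re_ofReal_mul, exp_ofReal_mul_I_re]
    exact sum_pos' (fun i _ => mul_nonneg (hp i) (hcos i).le) ⟨j, mem_univ j, mul_pos hj (hcos j)⟩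

theorem star_dotProduct_mulVec_conjTranspose_mul_diagonal_mul {n : Type*} [Fintype n]
    [DecidableEq n] (V : Matrix n n ℂ) (e y : n → ℂ) :
    star y ⬝ᵥ ((Vᴴ * diagonal e * V) *ᵥ y) = ∑ i, (normSq ((V *ᵥ y) i) : ℂ) * e i := by
  rw [← mulVec_mulVec, ← mulVec_mulVec, dotProduct_mulVec, ← star_mulVec]
  simp only [dotProduct, mulVec_diagonal, Pi.star_apply]
  refine sum_congr rfl fun i _ => ?_
  rw [← mul_conj, RCLike.star_def]
  ring

theorem star_dotProduct_mulVec_mem_phaseSector {n : Type*} [Fintype n] [DecidableEq n]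
    {V : Matrix n n ℂ} {e : n → ℂ} {l u : ℝ} (hV : IsUnit V.det) (he : ∀ i, ‖e i‖ = 1)
    (harg : ∀ i, arg (e i) ∈ Icc l u) (hul : u - l < π) {y : n → ℂ} (hy : y ≠ 0) :
    star y ⬝ᵥ ((Vᴴ * diagonal e * V) *ᵥ y) ∈ phaseSector l u := by
  have hVy : V *ᵥ y ≠ 0 := fun h => hV.ne_zero (exists_mulVec_eq_zero_iff.mp ⟨y, hy, h⟩)
  obtain ⟨j, hj⟩ := Function.ne_iff.mp hVy
  have he_polar (i : n) : exp (arg (e i) * I) = e i := by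
    simpa [he i] using norm_mul_exp_arg_mul_I (e i)
  rw [star_dotProduct_mulVec_conjTranspose_mul_diagonal_mul,
    sum_congr rfl fun i _ => congrArg _ (he_polar i).symm]
  exact sum_mul_exp_mem_phaseSector hul (fun i => normSq_nonneg _) ⟨j, normSq_pos.2 hj⟩ harg

theorem neg_conj_notMem_phaseSector {lG uG lH uH : ℝ} {z : ℂ} (hz : z ∈ phaseSector lG uG)
    (hu : uG + uH < π) (hl : -π < lG + lH) : -conj z ∉ phaseSector lH uH := by
  rintro ⟨s, hs, θ', hθ', h⟩
  obtain ⟨r, hr, θ, hθ, rfl⟩ := hz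
  have hprod : (s : ℂ) * exp ((θ' + θ : ℝ) * I) = ((-r : ℝ) : ℂ) := by
    calc (s : ℂ) * exp ((θ' + θ : ℝ) * I) = exp (θ * I) * (s * exp (θ' * I)) := by
          rw [mul_left_comm, ← exp_add]; push_cast; ring_nf
      _ = exp (θ * I) * -conj (r * exp (θ * I)) := by rw [h]
      _ = ((-r : ℝ) : ℂ) := by
          rw [map_mul, conj_ofReal, ← exp_conj, map_mul, conj_ofReal, conj_I, mul_neg,
            mul_left_comm, ← exp_add]
          push_cast; ring_nf; rw [exp_zero, mul_one]
  have harg := congrArg arg hprod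
  rw [arg_real_mul _ hs, arg_exp_mul_I,
    toIocMod_eq_self _ |>.2 ⟨by linarith [hθ.1, hθ'.1], by linarith [hθ.2, hθ'.2]⟩,
    arg_ofReal_of_neg (neg_neg_of_pos hr)] at harg
  linarith [hθ.2, hθ'.2]

/-- **Small phase theorem** (frequency-wise core, Lemma 1 of the paper).
Let `G`, `H` be sectorial matrices, given via their sectorial decompositions
`G = Vᴴ E V`, `H = Wᴴ F W` with `V`, `W` invertible and `E`, `F` diagonal
unitary, whose phases (arguments of the diagonal entries) lie in intervals
`[φ̲(G), φ̄(G)]` and `[φ̲(H), φ̄(H)]`, each of length `< π`.  If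
`φ̄(G) + φ̄(H) < π` and `φ̲(G) + φ̲(H) > −π`, then `det (I + G H) ≠ 0`. -/
theorem matrix_small_phase_theorem (n : ℕ)
    (G H V W : Matrix (Fin n) (Fin n) ℂ) (e f : Fin n → ℂ)
    (φlG φuG φlH φuH : ℝ)
    (hV : IsUnit V.det) (hW : IsUnit W.det)
    (he : ∀ i, ‖e i‖ = 1) (hf : ∀ i, ‖f i‖ = 1)
    (hG : G = Vᴴ * Matrix.diagonal e * V)
    (hH : H = Wᴴ * Matrix.diagonal f * W)
    (heArg : ∀ i, Complex.arg (e i) ∈ Set.Icc φlG φuG)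
    (hfArg : ∀ i, Complex.arg (f i) ∈ Set.Icc φlH φuH)
    (hGarc : φuG - φlG < Real.pi) (hHarc : φuH - φlH < Real.pi)
    (hsum_u : φuG + φuH < Real.pi) (hsum_l : -Real.pi < φlG + φlH) :
    (1 + G * H).det ≠ 0 := by
  intro hdet
  obtain ⟨x, hx, hGHx⟩ := exists_mulVec_eq_zero_iff.mpr hdet
  have hGy : G *ᵥ (H *ᵥ x) = -x := by
    rw [add_mulVec, one_mulVec, ← mulVec_mulVec] at hGHx
    exact eq_neg_of_add_eq_zero_right hGHx
  have hy : H *ᵥ x ≠ 0 := fun h => hx (by simpa [h] using hGy.symm)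
  have hHx : star x ⬝ᵥ (H *ᵥ x) = -conj (star (H *ᵥ x) ⬝ᵥ (G *ᵥ (H *ᵥ x))) := by
    rw [hGy, dotProduct_neg, map_neg, neg_neg, ← RCLike.star_def, star_dotProduct]
  have hGsec := hG ▸ star_dotProduct_mulVec_mem_phaseSector hV he heArg hGarc hy
  have hHsec := hH ▸ star_dotProduct_mulVec_mem_phaseSector hW hf hfArg hHarc hx
  exact neg_conj_notMem_phaseSector hGsec hsum_u hsum_l (hHx ▸ hHsec)
end
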